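/- arXiv:1309.0976 — 4 statements merged into one kernel-verified Lean document; each statement's English description precedes it below -/
import Mathlib

section
/- If γ : [0,1] → ℝⁿ is a continuous curve such that for all t' ≤ t'' ≤ t''' in [0,1], |γ(t') - γ(t'')| ≤ |γ(t') - γ(t''')|, then for any s₀ ∈ [0,1], any point x = γ(s₀), and any two points p, q in the convex hull of γ([0,s₀]) with p ≠ x and q ≠ x, one has ⟨p - x, q - x⟩ > 0. -/
open RealInnerProductSpace Set

lemma hull_inner_pos {n : ℕ} (x v : EuclideanSpace ℝ (Fin n)) (S : Set (EuclideanSpace ℝ (Fin n)))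
    (h0 : ∀ a ∈ S, 0 ≤ ⟪a - x, v⟫) (h1 : ∀ a ∈ S, a ≠ x → 0 < ⟪a - x, v⟫)
    (p : EuclideanSpace ℝ (Fin n)) (hp : p ∈ convexHull ℝ S) (hpx : p ≠ x) :
    0 < ⟪p - x, v⟫ := by
  rw [convexHull_eq] at hp
  obtain ⟨ι, t, w, z, hw, hw1, hz, hcm⟩ := hp
  have hpsum : p = ∑ i ∈ t, w i • z i := by
    rw [← hcm, Finset.centerMass_eq_of_sum_1 _ _ hw1]
  have hdiff : p - x = ∑ i ∈ t, w i • (z i - x) := by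
    rw [hpsum]
    simp only [smul_sub, Finset.sum_sub_distrib, ← Finset.sum_smul, hw1, one_smul]
  have hinner : ⟪p - x, v⟫ = ∑ i ∈ t, w i * ⟪z i - x, v⟫ := by
    rw [hdiff, sum_inner]
    exact Finset.sum_congr rfl fun i _ => real_inner_smul_left _ _ _
  rw [hinner]
  have hex : ∃ i ∈ t, 0 < w i ∧ z i ≠ x := by
    by_contra h
    push_neg at h
    apply hpx
    rw [hpsum]
    have hc : ∀ i ∈ t, w i • z i = w i • x := by
      intro i hi
      rcases eq_or_lt_of_le (hw i hi) with h' | h'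
      · rw [← h', zero_smul, zero_smul]
      · rw [h i hi h']
    rw [Finset.sum_congr rfl hc, ← Finset.sum_smul, hw1, one_smul]
  obtain ⟨i, hi, hwi, hzi⟩ := hex
  apply Finset.sum_pos'
  · intro j hj
    exact mul_nonneg (hw j hj) (h0 _ (hz j hj))
  · exact ⟨i, hi, mul_pos hwi (h1 _ (hz i hi) hzi)⟩

/-- self-expanding curves have acute angle property at endpoints. -/
theorem steepest_descent_acute_angle {n : ℕ}
    (γ : ℝ → EuclideanSpace ℝ (Fin n))
    (hcont : ContinuousOn γ (Icc 0 1))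
    (hsd : ∀ t' ∈ Icc (0:ℝ) 1, ∀ t'' ∈ Icc (0:ℝ) 1, ∀ t''' ∈ Icc (0:ℝ) 1,
      t' ≤ t'' → t'' ≤ t''' → ‖γ t' - γ t''‖ ≤ ‖γ t' - γ t'''‖)
    (s₀ : ℝ) (hs₀ : s₀ ∈ Icc (0:ℝ) 1)
    (p q : EuclideanSpace ℝ (Fin n))
    (hp : p ∈ convexHull ℝ (γ '' Icc 0 s₀))
    (hq : q ∈ convexHull ℝ (γ '' Icc 0 s₀))
    (hpx : p ≠ γ s₀) (hqx : q ≠ γ s₀) :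
    0 < ⟪p - γ s₀, q - γ s₀⟫ := by
  set x := γ s₀ with hx
  have hkey : ∀ t' ∈ Icc (0:ℝ) s₀, ∀ t'' ∈ Icc (0:ℝ) s₀, t' ≤ t'' →
      ‖γ t'' - x‖ ^ 2 ≤ 2 * ⟪γ t' - x, γ t'' - x⟫ := by
    intro t' ht' t'' ht'' hle
    have h1 : t' ∈ Icc (0:ℝ) 1 := ⟨ht'.1, ht'.2.trans hs₀.2⟩
    have h2 : t'' ∈ Icc (0:ℝ) 1 := ⟨ht''.1, ht''.2.trans hs₀.2⟩
    have hd : ‖γ t' - γ t''‖ ≤ ‖γ t' - x‖ := hsd t' h1 t'' h2 s₀ hs₀ hle ht''.2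
    have hsq : ‖γ t' - γ t''‖ ^ 2 ≤ ‖γ t' - x‖ ^ 2 :=
      pow_le_pow_left₀ (norm_nonneg _) hd 2
    have heq : γ t' - γ t'' = (γ t' - x) - (γ t'' - x) := by abel
    rw [heq] at hsq
    have hexp : ‖(γ t' - x) - (γ t'' - x)‖ ^ 2 =
        ‖γ t' - x‖ ^ 2 - 2 * ⟪γ t' - x, γ t'' - x⟫ + ‖γ t'' - x‖ ^ 2 := by
      rw [norm_sub_sq_real]
    rw [hexp] at hsq
    linarith
  have hpair0 : ∀ a ∈ γ '' Icc 0 s₀, ∀ b ∈ γ '' Icc 0 s₀, 0 ≤ ⟪a - x, b - x⟫ := by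
    rintro a ⟨t', ht', rfl⟩ b ⟨t'', ht'', rfl⟩
    rcases le_total t' t'' with h | h
    · nlinarith [hkey t' ht' t'' ht'' h, sq_nonneg ‖γ t'' - x‖]
    · have h' := hkey t'' ht'' t' ht' h
      rw [real_inner_comm]
      nlinarith [sq_nonneg ‖γ t' - x‖]
  have hpair1 : ∀ a ∈ γ '' Icc 0 s₀, ∀ b ∈ γ '' Icc 0 s₀, a ≠ x → b ≠ x →
      0 < ⟪a - x, b - x⟫ := by
    rintro a ⟨t', ht', rfl⟩ b ⟨t'', ht'', rfl⟩ ha hb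
    have ha' : (0:ℝ) < ‖γ t' - x‖ ^ 2 := pow_pos (norm_pos_iff.mpr (sub_ne_zero.mpr ha)) 2
    have hb' : (0:ℝ) < ‖γ t'' - x‖ ^ 2 := pow_pos (norm_pos_iff.mpr (sub_ne_zero.mpr hb)) 2
    rcases le_total t' t'' with h | h
    · nlinarith [hkey t' ht' t'' ht'' h]
    · have h' := hkey t'' ht'' t' ht' h
      rw [real_inner_comm]
      nlinarith
  -- Stage 1: for any b on the curve with b ≠ x, ⟪p - x, b - x⟫ > 0
  have stage1 : ∀ b ∈ γ '' Icc 0 s₀, b ≠ x → 0 < ⟪p - x, b - x⟫ := by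
    intro b hb hbx
    exact hull_inner_pos x (b - x) _ (fun a ha => hpair0 a ha b hb)
      (fun a ha hax => hpair1 a ha b hb hax hbx) p hp hpx
  -- Stage 2
  have := hull_inner_pos x (p - x) (γ '' Icc 0 s₀)
    (fun b hb => by
      rcases eq_or_ne b x with rfl | hbx
      · simp
      · exact le_of_lt (by rw [real_inner_comm]; exact stage1 b hb hbx))
    (fun b hb hbx => by rw [real_inner_comm]; exact stage1 b hb hbx) q hq hqx
  rw [real_inner_comm] at this
  exact this
end

section
/- If C ⊂ ℝⁿ is a closed convex cone containing its dual cone C*, then there exists a self-dual closed convex cone K with C* ⊆ K ⊆ C. -/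
open RealInnerProductSpace Set

/-! Zorn's lemma gives a maximal acute set `K ⊇ C*` (acute: `K ⊆ K*`), since acute sets are
closed under unions of chains; `C*` itself is acute because `C* ⊆ C`. For `x ∈ K*` the set
`insert x K` is still acute, so maximality forces `K* ⊆ K`. Hence `K = K*` is a dual cone, in
particular a closed convex cone, and dualizing `C* ⊆ K` gives `K = K* ⊆ C** = C` by the bipolar
theorem. -/

section

variable {E : Type*} [AddCommGroup E] [Module ℝ E] {C : Set E}

lemma Convex.add_mem_of_smul_mem (hconv : Convex ℝ C)
    (hcone : ∀ x ∈ C, ∀ r : ℝ, 0 ≤ r → r • x ∈ C)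
    {x y : E} (hx : x ∈ C) (hy : y ∈ C) : x + y ∈ C := by
  have hmid : (1 / 2 : ℝ) • x + (1 / 2 : ℝ) • y ∈ C :=
    hconv hx hy (by norm_num) (by norm_num) (by norm_num)
  have := hcone _ hmid 2 zero_le_two
  rwa [smul_add, smul_smul, smul_smul, mul_one_div_cancel two_ne_zero, one_smul, one_smul] at this

lemma ProperCone.exists_coe_eq_of_convex [TopologicalSpace E] (hclosed : IsClosed C)
    (hconv : Convex ℝ C) (hcone : ∀ x ∈ C, ∀ r : ℝ, 0 ≤ r → r • x ∈ C)
    (hne : C.Nonempty) :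
    ∃ K : ProperCone ℝ E, (K : Set E) = C :=
  ⟨⟨PointedCone.ofConeComb C hne fun x hx y hy a ha b hb =>
      hconv.add_mem_of_smul_mem hcone (hcone x hx a ha) (hcone y hy b hb), hclosed⟩, rfl⟩

end

namespace ProperCone

variable {E : Type*} [NormedAddCommGroup E] [InnerProductSpace ℝ E] [CompleteSpace E]

lemma coe_innerDual_eq_setOf (s : Set E) :
    (innerDual s : Set E) = {y | ∀ x ∈ s, 0 ≤ ⟪y, x⟫} := by
  ext y
  simp only [SetLike.mem_coe, mem_innerDual, mem_ofPred_eq, real_inner_comm]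

lemma sUnion_subset_innerDual_sUnion {c : Set (Set E)} (hc : IsChain (· ⊆ ·) c)
    (h : ∀ s ∈ c, s ⊆ innerDual s) : ⋃₀ c ⊆ innerDual (⋃₀ c) := by
  rintro x ⟨s, hs, hx⟩ y ⟨t, ht, hy⟩
  rcases hc.total hs ht with hst | hts
  · exact h t ht (hst hx) hy
  · exact h s hs hx (hts hy)

lemma insert_subset_innerDual_insert {s : Set E} {x : E} (hs : s ⊆ innerDual s)
    (hx : x ∈ innerDual s) : insert x s ⊆ innerDual (insert x s) := by
  rintro y (rfl | hy) z (rfl | hz)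
  · exact real_inner_self_nonneg
  · exact hx hz
  · exact (real_inner_comm _ _).trans_ge (hx hy)
  · exact hs hy hz

theorem exists_innerDual_eq_self_of_subset_innerDual {t : Set E} (ht : t ⊆ innerDual t) :
    ∃ K : ProperCone ℝ E, t ⊆ K ∧ innerDual K = K := by
  obtain ⟨m, htm, hmax⟩ := zorn_subset_nonempty {u : Set E | u ⊆ innerDual u}
    (fun c hcS hc _ => ⟨⋃₀ c, sUnion_subset_innerDual_sUnion hc hcS,
      fun _ => subset_sUnion_of_mem⟩) t ht
  have hm : (innerDual m : Set E) = m :=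
    Subset.antisymm (fun x hx => hmax.2 (insert_subset_innerDual_insert hmax.1 hx)
      (subset_insert x m) (mem_insert x m)) hmax.1
  exact ⟨innerDual m, hm.symm ▸ htm, by rw [hm]⟩

end ProperCone

open ProperCone

/-- Barker: a closed convex cone containing its dual contains a
self-dual cone between its dual and itself. -/
theorem exists_self_dual_cone_between {n : ℕ}
    (C : Set (EuclideanSpace ℝ (Fin n)))
    (hclosed : IsClosed C) (hconv : Convex ℝ C)
    (hcone : ∀ x ∈ C, ∀ r : ℝ, 0 ≤ r → r • x ∈ C)
    (hdual : {y : EuclideanSpace ℝ (Fin n) | ∀ x ∈ C, 0 ≤ ⟪y, x⟫} ⊆ C) :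
    ∃ K : Set (EuclideanSpace ℝ (Fin n)), IsClosed K ∧ Convex ℝ K ∧
      (∀ x ∈ K, ∀ r : ℝ, 0 ≤ r → r • x ∈ K) ∧
      K = {y : EuclideanSpace ℝ (Fin n) | ∀ x ∈ K, 0 ≤ ⟪y, x⟫} ∧
      {y : EuclideanSpace ℝ (Fin n) | ∀ x ∈ C, 0 ≤ ⟪y, x⟫} ⊆ K ∧ K ⊆ C := by
  have h0 : (0 : EuclideanSpace ℝ (Fin n)) ∈ C := hdual fun x _ => (inner_zero_left x).ge
  obtain ⟨C, rfl⟩ := exists_coe_eq_of_convex hclosed hconv hcone ⟨0, h0⟩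
  simp only [← coe_innerDual_eq_setOf] at hdual ⊢
  obtain ⟨K, hCK, hK⟩ :=
    exists_innerDual_eq_self_of_subset_innerDual (innerDual_le_innerDual hdual)
  refine ⟨K, K.isClosed, K.convex, fun x hx r hr => K.smul_mem hx hr, by rw [hK], hCK, ?_⟩
  have hKC : innerDual (K : Set _) ≤ C :=
    (innerDual_le_innerDual hCK).trans_eq (innerDual_innerDual C)
  rwa [hK] at hKC
end

section
/- For n = 2, among arcs S of the unit circle of angular length between π/2 and π (so that S ⊇ S*) and unit vectors u ∈ S*, the minimum of Φ(S,u) = (1/π) ∫_S ⟨θ, u⟩ dσ(θ) equals 1/π, attained exactly when S is an arc of length π/2 and u is one of its endpoints. -/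
open RealInnerProductSpace Set MeasureTheory

/-- The point of the unit circle at angle `θ`. -/
noncomputable def circlePt (θ : ℝ) : EuclideanSpace ℝ (Fin 2) :=
  (WithLp.equiv 2 (Fin 2 → ℝ)).symm ![Real.cos θ, Real.sin θ]

/-- The arc of the unit circle between angles `ϑ₁` and `ϑ₂`. -/
noncomputable def circleArc (ϑ₁ ϑ₂ : ℝ) : Set (EuclideanSpace ℝ (Fin 2)) :=
  circlePt '' Icc ϑ₁ ϑ₂

/-- `Φ(S,u) = (1/π) ∫_S ⟨θ, u⟩ dσ(θ)` for `n = 2` (`ω₂ = 2π`). -/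
noncomputable def PhiArc (S : Set (EuclideanSpace ℝ (Fin 2)))
    (u : EuclideanSpace ℝ (Fin 2)) : ℝ :=
  1 / Real.pi * ∫ θ in S, ⟪θ, u⟫ ∂(μH[(1 : ℝ)])

/-!
`μH[1]` of an arc `circlePt '' [a, b]` with `b - a < 2π` is `b - a`: it is at most `b - a`
because `circlePt` is `1`-Lipschitz, and at least `b - a` because an arc of length `δ` projects
(1-Lipschitz) onto a segment of length `2 sin (δ / 2)`, arcs add up along subdivisions, and
`n · 2 sin (L / 2n) → L`. So arclength on the arc is the image of Lebesgue measure on `[a, b]`, and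
`π Φ(S, circlePt α) = sin (b - α) - sin (a - α) = 2 sin (L / 2) cos (α - m)` with `L = b - a` and
`m` the midpoint. Duality at `a`, `b` and `m` gives `cos (α - m) ≥ sin (L / 2)`, hence
`π Φ ≥ 2 sin² (L / 2) = 1 - cos L ≥ 1`, with equality only for `L = π / 2` and `α` an endpoint.
-/

open Real

lemma inner_circlePt (s t : ℝ) : ⟪circlePt s, circlePt t⟫ = cos (s - t) := by
  simp [circlePt, PiLp.inner_apply, Fin.sum_univ_two, cos_sub, mul_comm]

lemma norm_circlePt (t : ℝ) : ‖circlePt t‖ = 1 := by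
  have h : ‖circlePt t‖ ^ 2 = 1 := by
    rw [← real_inner_self_eq_norm_sq, inner_circlePt, sub_self, cos_zero]
  exact (pow_eq_one_iff_of_nonneg (norm_nonneg _) two_ne_zero).1 h

lemma circlePt_eq_circlePt_iff {s t : ℝ} : circlePt s = circlePt t ↔ cos (s - t) = 1 := by
  rw [← inner_circlePt, inner_eq_one_iff_of_norm_eq_one (norm_circlePt s) (norm_circlePt t)]

lemma dist_circlePt_sq (s t : ℝ) : dist (circlePt s) (circlePt t) ^ 2 = 2 - 2 * cos (s - t) := by
  rw [dist_eq_norm, ← real_inner_self_eq_norm_sq, inner_sub_sub_self]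
  simp only [inner_circlePt, sub_self, cos_zero]
  rw [← cos_neg (t - s), neg_sub]
  ring

lemma lipschitzWith_one_circlePt : LipschitzWith 1 circlePt := by
  refine LipschitzWith.of_dist_le_mul fun s t => ?_
  rw [NNReal.coe_one, one_mul, Real.dist_eq,
    ← pow_le_pow_iff_left₀ dist_nonneg (abs_nonneg _) two_ne_zero, dist_circlePt_sq, sq_abs]
  linarith [one_sub_sq_div_two_le_cos (x := s - t)]

lemma injOn_circlePt {a b : ℝ} (h : b - a < 2 * π) : InjOn circlePt (Icc a b) := by
  intro s hs t ht hst
  have := (cos_eq_one_iff_of_lt_of_lt (x := s - t) (by linarith [hs.1, ht.2])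
    (by linarith [hs.2, ht.1])).1 (circlePt_eq_circlePt_iff.1 hst)
  linarith

lemma exists_circlePt_eq {u : EuclideanSpace ℝ (Fin 2)} (hu : ‖u‖ = 1) : ∃ α, circlePt α = u := by
  set z : ℂ := u 0 + u 1 * Complex.I
  have hz : ‖z‖ = 1 := by
    rw [Complex.norm_add_mul_I, ← hu, EuclideanSpace.norm_eq, Fin.sum_univ_two, Real.norm_eq_abs,
      Real.norm_eq_abs, sq_abs, sq_abs]
  have hz0 : z ≠ 0 := norm_ne_zero_iff.1 (by rw [hz]; exact one_ne_zero)
  refine ⟨Complex.arg z, ?_⟩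
  ext i
  fin_cases i
  · simp [circlePt, Complex.cos_arg hz0, hz, z]
  · simp [circlePt, Complex.sin_arg, hz, z]

lemma isCompact_circleArc (a b : ℝ) : IsCompact (circleArc a b) :=
  isCompact_Icc.image lipschitzWith_one_circlePt.continuous

lemma hausdorffMeasure_circleArc_le (a b : ℝ) :
    μH[1] (circleArc a b) ≤ ENNReal.ofReal (b - a) := by
  simpa [circleArc, hausdorffMeasure_real] using
    lipschitzWith_one_circlePt.hausdorffMeasure_image_le zero_le_one (Icc a b)

lemma ofReal_sin_sub_sin_le_hausdorffMeasure_circleArc {a b : ℝ} (hab : a ≤ b) (α : ℝ) :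
    ENNReal.ofReal (sin (b - α) - sin (a - α)) ≤ μH[1] (circleArc a b) := by
  set v := circlePt (α + π / 2)
  have hproj : ∀ t, innerSL ℝ v (circlePt t) = sin (t - α) := fun t => by
    rw [innerSL_apply_apply, inner_circlePt, show α + π / 2 - t = π / 2 - (t - α) by ring,
      cos_pi_div_two_sub]
  have hlip : LipschitzWith 1 (innerSL ℝ v) := by
    have hnorm : ‖innerSL ℝ v‖₊ = 1 := NNReal.eq (by simp [innerSL_apply_norm, v, norm_circlePt])
    exact hnorm ▸ (innerSL ℝ v).lipschitz
  have himage : Icc (sin (a - α)) (sin (b - α)) ⊆ innerSL ℝ v '' circleArc a b := by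
    rw [circleArc, image_image]
    simp only [hproj]
    exact intermediate_value_Icc (f := fun t => sin (t - α)) hab (by fun_prop)
  calc ENNReal.ofReal (sin (b - α) - sin (a - α)) = volume (Icc (sin (a - α)) (sin (b - α))) :=
        (Real.volume_Icc).symm
    _ ≤ volume (innerSL ℝ v '' circleArc a b) := measure_mono himage
    _ ≤ μH[1] (circleArc a b) := by
        simpa [hausdorffMeasure_real] using hlip.hausdorffMeasure_image_le zero_le_one _

lemma hausdorffMeasure_circleArc_add {a b c : ℝ} (hab : a ≤ b) (hbc : b ≤ c)
    (hac : c - a < 2 * π) :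
    μH[1] (circleArc a c) = μH[1] (circleArc a b) + μH[1] (circleArc b c) := by
  have := Measure.nullSingletonClass_hausdorff (X := EuclideanSpace ℝ (Fin 2)) one_pos
  have hunion : circleArc a b ∪ circleArc b c = circleArc a c := by
    rw [circleArc, circleArc, ← image_union, Icc_union_Icc_eq_Icc hab hbc, circleArc]
  have hinter : circleArc a b ∩ circleArc b c ⊆ {circlePt b} := by
    rintro _ ⟨⟨s, hs, rfl⟩, t, ht, hts⟩
    have : t = s := injOn_circlePt hac ⟨hab.trans ht.1, ht.2⟩ ⟨hs.1, hs.2.trans hbc⟩ hts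
    rw [mem_singleton_iff, show s = b by linarith [hs.2, ht.1]]
  rw [← hunion, ← add_zero (μH[1] (_ ∪ _)),
    ← measure_mono_null hinter (measure_singleton (μ := μH[1]) _),
    measure_union_add_inter _ (isCompact_circleArc b c).isClosed.measurableSet]

lemma natCast_mul_le_hausdorffMeasure_circleArc (a : ℝ) {δ : ℝ} (hδ : 0 ≤ δ) (n : ℕ)
    (hn : n * δ < 2 * π) :
    n * ENNReal.ofReal (2 * sin (δ / 2)) ≤ μH[1] (circleArc a (a + n * δ)) := by
  induction n with
  | zero => simp
  | succ n ih =>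
    have hnδ : n * δ ≤ (n + 1 : ℕ) * δ := by gcongr; omega
    have hpiece := ofReal_sin_sub_sin_le_hausdorffMeasure_circleArc
      (le_add_of_nonneg_right hδ : a + n * δ ≤ a + n * δ + δ) (a + n * δ + δ / 2)
    rw [show a + n * δ + δ - (a + n * δ + δ / 2) = δ / 2 by ring,
      show a + n * δ - (a + n * δ + δ / 2) = -(δ / 2) by ring, sin_neg, sub_neg_eq_add,
      ← two_mul] at hpiece
    rw [Nat.cast_succ, add_one_mul, show a + (n + 1 : ℕ) * δ = a + n * δ + δ by push_cast; ring,
      hausdorffMeasure_circleArc_add (le_add_of_nonneg_right (by positivity))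
        (le_add_of_nonneg_right hδ) (by push_cast at hn; linarith)]
    exact add_le_add (ih (hnδ.trans_lt hn)) hpiece

lemma sub_cube_div_le_natCast_mul_sin {L : ℝ} (hL : 0 ≤ L) {n : ℕ} (hn : 1 ≤ n) :
    L - L ^ 3 / 24 / n ≤ n * (2 * sin (L / (2 * n))) := by
  have hn' : (1 : ℝ) ≤ n := by exact_mod_cast hn
  have hsin := sin_ge_sub_cube (x := L / (2 * n)) (by positivity)
  have hexpand : n * (2 * (L / (2 * n) - (L / (2 * n)) ^ 3 / 6)) = L - L ^ 3 / 24 / n ^ 2 := by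
    field_simp
    ring
  have hcube : L ^ 3 / 24 / n ^ 2 ≤ L ^ 3 / 24 / n :=
    div_le_div_of_nonneg_left (by positivity) (by positivity) (by nlinarith)
  nlinarith

lemma hausdorffMeasure_circleArc {a b : ℝ} (hab : a ≤ b) (h : b - a < 2 * π) :
    μH[1] (circleArc a b) = ENNReal.ofReal (b - a) := by
  refine le_antisymm (hausdorffMeasure_circleArc_le a b) ?_
  set L := b - a
  have hL : 0 ≤ L := sub_nonneg.2 hab
  have hbound : ∀ n : ℕ, 1 ≤ n → ENNReal.ofReal (L - L ^ 3 / 24 / n) ≤ μH[1] (circleArc a b) := by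
    intro n hn
    have hn' : (n : ℝ) ≠ 0 := by positivity
    have := natCast_mul_le_hausdorffMeasure_circleArc a (div_nonneg hL n.cast_nonneg) n
      (by rwa [mul_div_cancel₀ _ hn'])
    rw [mul_div_cancel₀ _ hn', add_sub_cancel, ← ENNReal.ofReal_natCast,
      ← ENNReal.ofReal_mul n.cast_nonneg, div_div, mul_comm (n : ℝ) 2] at this
    exact (ENNReal.ofReal_le_ofReal (sub_cube_div_le_natCast_mul_sin hL hn)).trans this
  refine le_of_tendsto ?_ (Filter.eventually_atTop.2 ⟨1, hbound⟩)
  simpa using ENNReal.tendsto_ofReal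
    (tendsto_const_nhds.sub (tendsto_const_div_atTop_nhds_zero_nat (L ^ 3 / 24)))

lemma restrict_image_Icc_eq_map {X : Type*} [TopologicalSpace X] [T2Space X] [MeasurableSpace X]
    [BorelSpace X] {f : ℝ → X} (hf : Continuous f) {a b : ℝ} (hinj : InjOn f (Icc a b))
    {μ : Measure X} (hμ : ∀ c ≤ b, μ (f '' Icc a c) = volume (Icc a c)) :
    μ.restrict (f '' Icc a b) = (volume.restrict (Icc a b)).map f := by
  obtain ⟨g, hg, hgf⟩ := ((hf.comp continuous_subtype_val).isClosedEmbedding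
    hinj.injective).measurableEmbedding.exists_measurable_extend measurable_subtype_coe
    fun _ => ⟨0⟩
  -- `g` is a measurable left inverse of `f` on `[a, b]`: it turns `μ` on the curve into a measure
  -- on `ℝ`, which is identified by its values on the rays `Iic c`.
  have hleft : ∀ t ∈ Icc a b, g (f t) = t := fun t ht => congrFun hgf ⟨t, ht⟩
  have : IsFiniteMeasure (μ.restrict (f '' Icc a b)) :=
    ⟨by rw [Measure.restrict_apply_univ, hμ b le_rfl]; exact measure_Icc_lt_top⟩
  have hsub : ∀ c, g ⁻¹' Iic c ∩ f '' Icc a b = f '' Icc a (min b c) := fun c => by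
    ext x
    constructor
    · rintro ⟨hx, t, ht, rfl⟩
      exact ⟨t, ⟨ht.1, le_min ht.2 (hleft t ht ▸ hx)⟩, rfl⟩
    · rintro ⟨t, ht, rfl⟩
      have ht' : t ∈ Icc a b := ⟨ht.1, ht.2.trans (min_le_left _ _)⟩
      exact ⟨by simpa [hleft t ht'] using ht.2.trans (min_le_right _ _), t, ht', rfl⟩
  have hpush : (μ.restrict (f '' Icc a b)).map g = volume.restrict (Icc a b) := by
    refine Measure.ext_of_Iic _ _ fun c => ?_
    rw [Measure.map_apply hg measurableSet_Iic, Measure.restrict_apply (hg measurableSet_Iic),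
      Measure.restrict_apply measurableSet_Iic, hsub, hμ _ (min_le_left _ _)]
    congr 1
    ext t
    simp only [mem_Icc, mem_inter_iff, mem_Iic, le_min_iff]
    tauto
  have hfg : f ∘ g =ᵐ[μ.restrict (f '' Icc a b)] id := by
    filter_upwards [ae_restrict_mem₀ ((isCompact_Icc.image hf).isClosed.nullMeasurableSet)]
    rintro _ ⟨t, ht, rfl⟩
    simp [hleft t ht]
  rw [← hpush, Measure.map_map hf.measurable hg, Measure.map_congr hfg, Measure.map_id]

lemma restrict_circleArc_eq_map {a b : ℝ} (h : b - a < 2 * π) :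
    μH[1].restrict (circleArc a b) = (volume.restrict (Icc a b)).map circlePt := by
  refine restrict_image_Icc_eq_map lipschitzWith_one_circlePt.continuous (injOn_circlePt h)
    fun c hc => ?_
  rcases le_or_gt a c with hac | hca
  · rw [Real.volume_Icc, ← hausdorffMeasure_circleArc hac (by linarith)]
    rfl
  · simp [Icc_eq_empty_of_lt hca]

lemma phiArc_circleArc_circlePt {a b : ℝ} (hab : a ≤ b) (h : b - a < 2 * π) (α : ℝ) :
    PhiArc (circleArc a b) (circlePt α) = (sin (b - α) - sin (a - α)) / π := by
  rw [PhiArc, restrict_circleArc_eq_map h, integral_map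
    lipschitzWith_one_circlePt.continuous.aemeasurable (by fun_prop)]
  simp only [inner_circlePt]
  rw [integral_Icc_eq_integral_Ioc, ← intervalIntegral.integral_of_le hab,
    intervalIntegral.integral_comp_sub_right (fun t => cos t), integral_cos, one_div_mul_eq_div]

lemma cos_add_mul_cos_sub (x y : ℝ) : cos (x + y) * cos (x - y) = cos x ^ 2 - sin y ^ 2 := by
  rw [cos_add, cos_sub]
  linear_combination cos x ^ 2 * sin_sq_add_cos_sq y - sin y ^ 2 * sin_sq_add_cos_sq x

lemma sin_le_cos_of_cos_add_mul_cos_sub_nonneg {x y : ℝ} (hx : 0 ≤ cos x) (hy : 0 ≤ sin y)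
    (h : 0 ≤ cos (x + y) * cos (x - y)) : sin y ≤ cos x := by
  rw [cos_add_mul_cos_sub] at h
  exact (pow_le_pow_iff_left₀ hy hx two_ne_zero).1 (by linarith)

lemma one_le_two_mul_sin_mul_cos {x y : ℝ} (hy : y ∈ Icc (π / 4) (π / 2)) (hx : 0 ≤ cos x)
    (h₁ : 0 ≤ cos (x + y)) (h₂ : 0 ≤ cos (x - y)) :
    1 ≤ 2 * sin y * cos x ∧
      (2 * sin y * cos x = 1 → y = π / 4 ∧ (cos (x + y) = 1 ∨ cos (x - y) = 1)) := by
  obtain ⟨hy₁, hy₂⟩ := hy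
  have hπ := pi_pos
  have hsin : 0 ≤ sin y := sin_nonneg_of_nonneg_of_le_pi (by linarith) (by linarith)
  have hsc : sin y * sin y ≤ sin y * cos x :=
    mul_le_mul_of_nonneg_left (sin_le_cos_of_cos_add_mul_cos_sub_nonneg hx hsin
      (mul_nonneg h₁ h₂)) hsin
  have hcos2 : cos (2 * y) = 1 - 2 * sin y ^ 2 := by rw [cos_two_mul, cos_sq']; ring
  have hcos2_nonpos : cos (2 * y) ≤ 0 :=
    cos_nonpos_of_pi_div_two_le_of_le (by linarith) (by linarith)
  refine ⟨by nlinarith, fun heq => ?_⟩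
  have hsin2 : sin y ^ 2 = 1 / 2 := by nlinarith
  have hy : y = π / 4 := by
    have : 2 * y = 2 * (π / 4) := injOn_cos ⟨by linarith, by linarith⟩ ⟨by linarith, by linarith⟩
      (by rw [show 2 * (π / 4) = π / 2 by ring, cos_pi_div_two]; linarith)
    linarith
  have hcx : cos x = sin y := by nlinarith
  have hcy : cos y = sin y := by
    rw [hy, cos_pi_div_four, sin_pi_div_four]
  have hsx : sin x ^ 2 + sin y ^ 2 = 1 := hcx ▸ sin_sq_add_cos_sq x
  refine ⟨hy, ?_⟩
  rw [cos_add, cos_sub, hcx, hcy, ← sub_eq_zero, ← sub_eq_zero (a := _ + _), ← mul_eq_zero]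
  linear_combination (2 * (sin y ^ 2 - 1)) * hsin2 - sin y ^ 2 * hsx

lemma one_le_sin_sub_sin {a b α : ℝ} (hL : b - a ∈ Icc (π / 2) π) (ha : 0 ≤ cos (α - a))
    (hb : 0 ≤ cos (α - b)) (hm : 0 ≤ cos (α - (a + b) / 2)) :
    1 ≤ sin (b - α) - sin (a - α) ∧
      (sin (b - α) - sin (a - α) = 1 → b - a = π / 2 ∧ (cos (α - a) = 1 ∨ cos (α - b) = 1)) := by
  have hsum : sin (b - α) - sin (a - α) = 2 * sin ((b - a) / 2) * cos (α - (a + b) / 2) := by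
    rw [sin_sub_sin, show (b - α - (a - α)) / 2 = (b - a) / 2 by ring,
      show (b - α + (a - α)) / 2 = -(α - (a + b) / 2) by ring, cos_neg]
  have hαa : α - (a + b) / 2 + (b - a) / 2 = α - a := by ring
  have hαb : α - (a + b) / 2 - (b - a) / 2 = α - b := by ring
  have key := one_le_two_mul_sin_mul_cos ⟨by linarith [hL.1], by linarith [hL.2]⟩ hm
    (hαa ▸ ha) (hαb ▸ hb)
  rw [hαa, hαb] at key
  rw [hsum]
  exact ⟨key.1, fun heq => ⟨by linarith [(key.2 heq).1], (key.2 heq).2⟩⟩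

/-- for arcs of angular length in `[π/2, π]` and `u` in the dual
arc, the minimum of `Φ` is `1/π`, attained exactly for arcs of length `π/2`
with `u` an endpoint. -/
theorem arc_phi_min :
    (∀ ϑ₁ ϑ₂ : ℝ, ϑ₂ - ϑ₁ ∈ Icc (Real.pi / 2) Real.pi →
      ∀ u ∈ Metric.sphere (0 : EuclideanSpace ℝ (Fin 2)) 1,
        (∀ x ∈ circleArc ϑ₁ ϑ₂, 0 ≤ ⟪u, x⟫) →
        1 / Real.pi ≤ PhiArc (circleArc ϑ₁ ϑ₂) u) ∧
    (∀ ϑ₁ ϑ₂ : ℝ, ϑ₂ - ϑ₁ ∈ Icc (Real.pi / 2) Real.pi →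
      ∀ u ∈ Metric.sphere (0 : EuclideanSpace ℝ (Fin 2)) 1,
        (∀ x ∈ circleArc ϑ₁ ϑ₂, 0 ≤ ⟪u, x⟫) →
        (PhiArc (circleArc ϑ₁ ϑ₂) u = 1 / Real.pi ↔
          ϑ₂ - ϑ₁ = Real.pi / 2 ∧ (u = circlePt ϑ₁ ∨ u = circlePt ϑ₂))) := by
  suffices h : ∀ a b, b - a ∈ Icc (π / 2) π →
      ∀ u ∈ Metric.sphere (0 : EuclideanSpace ℝ (Fin 2)) 1, (∀ x ∈ circleArc a b, 0 ≤ ⟪u, x⟫) →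
        1 / π ≤ PhiArc (circleArc a b) u ∧
          (PhiArc (circleArc a b) u = 1 / π ↔
            b - a = π / 2 ∧ (u = circlePt a ∨ u = circlePt b)) from
    ⟨fun a b hL u hu hdual => (h a b hL u hu hdual).1,
      fun a b hL u hu hdual => (h a b hL u hu hdual).2⟩
  intro a b hL u hu hdual
  have hab : a ≤ b := by linarith [hL.1, pi_pos]
  have hlt : b - a < 2 * π := by linarith [hL.2, pi_pos]
  obtain ⟨α, rfl⟩ := exists_circlePt_eq (mem_sphere_zero_iff_norm.1 hu)
  have hcos : ∀ t ∈ Icc a b, 0 ≤ cos (α - t) := fun t ht => by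
    simpa only [real_inner_comm, inner_circlePt] using hdual _ ⟨t, ht, rfl⟩
  obtain ⟨hge, heq⟩ := one_le_sin_sub_sin hL (hcos a ⟨le_rfl, hab⟩) (hcos b ⟨hab, le_rfl⟩)
    (hcos _ ⟨by linarith, by linarith⟩)
  refine ⟨?_, fun h => ?_, ?_⟩
  · rwa [phiArc_circleArc_circlePt hab hlt, div_le_div_iff_of_pos_right pi_pos]
  · rw [phiArc_circleArc_circlePt hab hlt, div_left_inj' pi_ne_zero] at h
    simpa only [circlePt_eq_circlePt_iff] using heq h
  · rintro ⟨hL', h | h⟩ <;> rw [h, phiArc_circleArc_circlePt hab hlt, sub_self, sin_zero]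
    · rw [hL', sin_pi_div_two, sub_zero]
    · rw [show a - b = -(π / 2) by linarith, sin_neg, sin_pi_div_two, zero_sub, neg_neg]
end

section
/- Let γ ⊂ ℝ³ be a steepest descent curve in arclength parametrization x(s). If x'(s) exists at some s, then the tangent cone to co(γ(s)) at x(s) cannot be an orthant (a rotation of the nonnegative orthant translated to x(s)). -/
/-!
Chords `x t - x s` and `x t' - x s` with `t, t' < s` form an acute angle by the steepest descent
property, and they are nonzero because the curve has unit speed. If the tangent cone were an
orthant with axes `w 0, w 1, w 2`, each axis would be a limit of chord directions: otherwise the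
cone would lie in a closed halfspace that misses the axis. Since the velocity at `σ` has
nonpositive inner product with every chord `x t - x σ`, `t ≤ σ`, chords approximating the axes
force the velocity to make an angle of almost 90° or more with all three axes just before `s`;
integrating gives `⟪∑ j, w j, x'(s)⟫ ≤ -1/2`, so `x'(s) ≠ 0` and the chord directions tend to
`-x'(s)/‖x'(s)‖` as `t → s`. By compactness every axis is then a chord direction or equal to
`-x'(s)/‖x'(s)‖`. Two of the three axes fall into the same case, and they cannot be orthogonal.
-/

open RealInnerProductSpace Set MeasureTheory Filter Topology NormedSpace Module

variable {E : Type*} [NormedAddCommGroup E] [InnerProductSpace ℝ E]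

/-- The hypothesis on `u` says that `‖u‖⁻¹ • u` lies within distance `ε` of `w`. -/
theorem inner_le_add_of_near_direction {d u w : E} {η ε : ℝ} (hd : ‖d‖ ≤ 1) (hw : ‖w‖ = 1)
    (hu : u ≠ 0) (hε : 0 ≤ ε) (huw : (1 - ε ^ 2 / 2) * ‖u‖ ≤ ⟪u, w⟫)
    (hdu : ⟪d, u⟫ ≤ η * ‖u‖) : ⟪d, w⟫ ≤ η + ε := by
  have hu0 : 0 < ‖u‖ := norm_pos_iff.mpr hu
  set a := normalize u
  have ha : ‖a‖ = 1 := norm_normalize hu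
  have hda : ⟪d, a⟫ ≤ η := by
    rw [show a = ‖u‖⁻¹ • u from rfl, real_inner_smul_right, inv_mul_le_iff₀ hu0]; linarith
  have haw : 1 - ε ^ 2 / 2 ≤ ⟪a, w⟫ := by
    rw [show a = ‖u‖⁻¹ • u from rfl, real_inner_smul_left, le_inv_mul_iff₀ hu0]; linarith
  have hdist : ‖w - a‖ ≤ ε := by
    have : ‖w - a‖ ^ 2 ≤ ε ^ 2 := by
      rw [norm_sub_sq_real, hw, ha, real_inner_comm]; linarith
    exact (pow_le_pow_iff_left₀ (norm_nonneg _) hε two_ne_zero).1 this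
  calc ⟪d, w⟫ = ⟪d, a⟫ + ⟪d, w - a⟫ := by rw [inner_sub_right]; ring
    _ ≤ η + ‖d‖ * ‖w - a‖ := add_le_add hda (real_inner_le_norm _ _)
    _ ≤ η + ε := by nlinarith [norm_nonneg d, norm_nonneg (w - a)]

theorem Orthonormal.sum_sq_inner_eq {ι : Type*} [Fintype ι] [Nonempty ι] {w : ι → E}
    (hw : Orthonormal ℝ w) (hcard : Fintype.card ι = finrank ℝ E) (y : E) :
    ∑ j, ⟪y, w j⟫ ^ 2 = ‖y‖ ^ 2 := by
  have : FiniteDimensional ℝ E := Module.finite_of_finrank_pos (hcard ▸ Fintype.card_pos)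
  have := ((basisOfOrthonormalOfCardEqFinrank hw hcard).toOrthonormalBasis
    (by simpa using hw)).sum_sq_inner_left y
  rwa [Module.Basis.coe_toOrthonormalBasis, coe_basisOfOrthonormalOfCardEqFinrank] at this

theorem Orthonormal.inner_sum_le_of_forall_inner_le {w : Fin 3 → E} (hw : Orthonormal ℝ w)
    (hE : finrank ℝ E = 3) {d : E} (hd : ‖d‖ = 1) (hsmall : ∀ j, ⟪d, w j⟫ ≤ 1 / 12) :
    ⟪d, ∑ j, w j⟫ ≤ -1 / 2 := by
  have hsq := hw.sum_sq_inner_eq (by simp [hE]) d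
  have hcoord : ∀ j, ⟪d, w j⟫ ^ 2 ≤ 1 / 12 - 11 / 12 * ⟪d, w j⟫ := fun j => by
    nlinarith [hsmall j, neg_one_le_real_inner_of_norm_eq_one hd (hw.1 j)]
  rw [inner_sum]
  simp only [Fin.sum_univ_three, hd] at hsq ⊢
  linarith [hcoord 0, hcoord 1, hcoord 2]

theorem continuousAt_normalize {y : E} (hy : y ≠ 0) : ContinuousAt (normalize : E → E) y :=
  (continuous_norm.continuousAt.inv₀ (norm_ne_zero_iff.2 hy)).smul continuousAt_id

def convexTangentCone (K : Set E) (q : E) : Set E :=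
  closure (⋃ y ∈ K, {z | ∃ r : ℝ, 0 ≤ r ∧ z = r • (y - q)})

def orthant (w : Fin 3 → E) : Set E :=
  {z | ∃ a b c : ℝ, 0 ≤ a ∧ 0 ≤ b ∧ 0 ≤ c ∧ z = a • w 0 + b • w 1 + c • w 2}

theorem sub_mem_convexTangentCone {K : Set E} {y : E} (hy : y ∈ K) (q : E) :
    y - q ∈ convexTangentCone K q :=
  subset_closure (mem_iUnion₂.2 ⟨y, hy, 1, zero_le_one, (one_smul ℝ _).symm⟩)

theorem convexTangentCone_convexHull_subset {S : Set E} {q f : E}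
    (h : ∀ y ∈ S, ⟪y - q, f⟫ ≤ 0) : convexTangentCone (convexHull ℝ S) q ⊆ {z | ⟪z, f⟫ ≤ 0} := by
  have hconv : Convex ℝ {y : E | ⟪y - q, f⟫ ≤ 0} := by
    simpa only [inner_sub_left, sub_nonpos] using convex_halfSpace_le
      (isBoundedBilinearMap_inner.isBoundedLinearMap_left f).toIsLinearMap ⟪q, f⟫
  refine closure_minimal ?_ (isClosed_le (by fun_prop) continuous_const)
  simp only [iUnion_subset_iff]
  rintro y hy _ ⟨r, hr, rfl⟩
  rw [mem_ofPred_eq, real_inner_smul_left]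
  exact mul_nonpos_of_nonneg_of_nonpos hr (convexHull_min h hconv hy)

theorem mem_orthant_self (w : Fin 3 → E) (i : Fin 3) : w i ∈ orthant w := by
  fin_cases i
  · exact ⟨1, 0, 0, by simp⟩
  · exact ⟨0, 1, 0, by simp⟩
  · exact ⟨0, 0, 1, by simp⟩

theorem Orthonormal.norm_le_inner_sum_of_mem_orthant {w : Fin 3 → E} (hw : Orthonormal ℝ w)
    {z : E} (hz : z ∈ orthant w) : ‖z‖ ≤ ⟪z, ∑ j, w j⟫ := by
  obtain ⟨a, b, c, ha, hb, hc, rfl⟩ := hz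
  have hinner : ⟪a • w 0 + b • w 1 + c • w 2, ∑ j, w j⟫ = a + b + c := by
    simp [Fin.sum_univ_three, inner_add_left, inner_add_right, real_inner_smul_left,
      hw.inner_eq_zero, hw.1]
  rw [hinner]
  refine (norm_add₃_le ..).trans ?_
  simp [norm_smul, hw.1, abs_of_nonneg, ha, hb, hc]

theorem Orthonormal.exists_inner_gt_of_convexTangentCone_eq_orthant {w : Fin 3 → E}
    (hw : Orthonormal ℝ w) {S : Set E} {q : E}
    (h : convexTangentCone (convexHull ℝ S) q = orthant w) (i : Fin 3) {ε : ℝ} (hε : 0 < ε)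
    (hε1 : ε ≤ 1) : ∃ y ∈ S, (1 - ε) * ‖y - q‖ < ⟪y - q, w i⟫ := by
  by_contra! hfar
  have hhalf : ∀ y ∈ S, ⟪y - q, w i - (1 - ε) • ∑ j, w j⟫ ≤ 0 := fun y hy => by
    have hnorm := hw.norm_le_inner_sum_of_mem_orthant
      (h ▸ sub_mem_convexTangentCone (subset_convexHull ℝ S hy) q)
    rw [inner_sub_right, real_inner_smul_right]
    nlinarith [hfar y hy]
  have hwi := convexTangentCone_convexHull_subset hhalf (h ▸ mem_orthant_self w i)
  have hsum : ⟪w i, ∑ j, w j⟫ = 1 := by simp [inner_sum, orthonormal_iff_ite.1 hw]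
  rw [mem_ofPred_eq, inner_sub_right, real_inner_smul_right, hsum, real_inner_self_eq_norm_sq,
    hw.1] at hwi
  linarith

theorem LipschitzOnWith.sub_le_mul_of_ae_deriv_le {f : ℝ → ℝ} {K : NNReal} {a b c : ℝ}
    (hab : a ≤ b) (hf : LipschitzOnWith K f (Icc a b))
    (h : ∀ᵐ σ ∂(volume.restrict (Ioo a b)), deriv f σ ≤ c) :
    f b - f a ≤ c * (b - a) := by
  rw [← uIcc_of_le hab] at hf
  have hac := hf.absolutelyContinuousOnInterval
  have hint : IntegrableOn (deriv f) (Ioo a b) :=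
    (hac.intervalIntegrable_deriv.1).mono_set Ioo_subset_Ioc_self
  calc f b - f a = ∫ σ in Ioo a b, deriv f σ := by
        rw [← hac.integral_deriv_eq_sub, intervalIntegral.integral_of_le hab,
          integral_Ioc_eq_integral_Ioo]
    _ ≤ ∫ _ in Ioo a b, c :=
        setIntegral_mono_ae_restrict hint (integrableOn_const measure_Ioo_lt_top.ne) h
    _ = c * (b - a) := by simp [hab, mul_comm]

def IsArclengthParamOn (x xd : ℝ → E) (I : Set ℝ) : Prop :=
  ∀ᵐ σ ∂(volume.restrict I), HasDerivWithinAt x (xd σ) I σ ∧ ‖xd σ‖ = 1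

theorem IsArclengthParamOn.ae_restrict_Ioo {x xd : ℝ → E} {a b c d : ℝ}
    (h : IsArclengthParamOn x xd (Icc a b)) (hc : a ≤ c) (hd : d ≤ b) :
    ∀ᵐ σ ∂(volume.restrict (Ioo c d)), HasDerivAt x (xd σ) σ ∧ ‖xd σ‖ = 1 := by
  have hsub : Ioo c d ⊆ Icc a b := fun σ hσ => ⟨hc.trans hσ.1.le, hσ.2.le.trans hd⟩
  filter_upwards [ae_restrict_of_ae_restrict_of_subset hsub h, ae_restrict_mem measurableSet_Ioo]
    with σ ⟨hder, hunit⟩ hσ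
  exact ⟨hder.hasDerivAt (Icc_mem_nhds (hc.trans_lt hσ.1) (hσ.2.trans_le hd)), hunit⟩

def SteepestDescentOn (x : ℝ → E) (I : Set ℝ) : Prop :=
  ∀ t' ∈ I, ∀ t'' ∈ I, ∀ t''' ∈ I, t' ≤ t'' → t'' ≤ t''' → ‖x t' - x t''‖ ≤ ‖x t' - x t'''‖

namespace SteepestDescentOn

variable {x : ℝ → E} {I : Set ℝ}

theorem inner_sub_pos (hx : SteepestDescentOn x I) {t t' s : ℝ} (ht : t ∈ I) (ht' : t' ∈ I)
    (hs : s ∈ I) (htt' : t ≤ t') (ht's : t' ≤ s) (hne : x t' ≠ x s) :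
    0 < ⟪x t - x s, x t' - x s⟫ := by
  have hsq := pow_le_pow_left₀ (norm_nonneg _) (hx t ht t' ht' s hs htt' ht's) 2
  rw [show x t - x t' = (x t - x s) - (x t' - x s) by abel, norm_sub_sq_real] at hsq
  have : 0 < ‖x t' - x s‖ ^ 2 := by positivity [sub_ne_zero_of_ne hne]
  linarith

theorem inner_deriv_sub_nonneg {a b : ℝ} (hx : SteepestDescentOn x (Icc a b)) {t σ : ℝ}
    {d : E} (ht : a ≤ t) (htσ : t ≤ σ) (hσ : σ ≤ b) (hd : HasDerivWithinAt x d (Icc a b) σ) :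
    0 ≤ ⟪x σ - x t, d⟫ := by
  rcases htσ.eq_or_lt with rfl | htσ
  · simp
  have hsub : Icc t σ ⊆ Icc a b := Icc_subset_Icc ht hσ
  have hmono : MonotoneOn (fun τ => ‖x τ - x t‖ ^ 2) (Icc t σ) := fun τ hτ τ' hτ' hle => by
    simp only [← norm_sub_rev (x t)]
    exact pow_le_pow_left₀ (norm_nonneg _)
      (hx t (hsub ⟨le_rfl, htσ.le⟩) τ (hsub hτ) τ' (hsub hτ') hτ.1 hle) 2
  have hacc : AccPt σ (𝓟 (Icc t σ)) := by
    rw [accPt_principal_iff_nhdsWithin, Icc_sdiff_right]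
    exact right_nhdsWithin_Ico_neBot htσ
  have := ((hd.mono hsub).sub_const (x t)).norm_sq.nonneg_of_monotoneOn hacc hmono
  linarith

theorem inner_deriv_le {a b : ℝ} (hx : SteepestDescentOn x (Icc a b))
    (hlip : LipschitzOnWith 1 x (Icc a b)) {t σ s : ℝ} {d : E} (ht : a ≤ t) (htσ : t ≤ σ)
    (hσs : σ ≤ s) (hs : s ≤ b) (hd : HasDerivWithinAt x d (Icc a b) σ) :
    ⟪d, x t - x s⟫ ≤ ‖d‖ * (s - σ) := by
  have hpast := hx.inner_deriv_sub_nonneg ht htσ (hσs.trans hs) hd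
  have hnear : ‖x σ - x s‖ ≤ s - σ := by
    have := hlip.dist_le_mul σ ⟨ht.trans htσ, hσs.trans hs⟩ s ⟨(ht.trans htσ).trans hσs, hs⟩
    rwa [NNReal.coe_one, one_mul, dist_eq_norm, Real.dist_eq, abs_of_nonpos (by linarith),
      neg_sub] at this
  calc ⟪d, x t - x s⟫ = -⟪x σ - x t, d⟫ + ⟪d, x σ - x s⟫ := by
        simp only [inner_sub_right, real_inner_comm d]; ring
    _ ≤ ‖d‖ * (s - σ) := by
        nlinarith [real_inner_le_norm d (x σ - x s), norm_nonneg d]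

theorem ne_of_lt {a b : ℝ} (hx : SteepestDescentOn x (Icc a b)) {xd : ℝ → E}
    (harc : IsArclengthParamOn x xd (Icc a b))
    {t s : ℝ} (ht : a ≤ t) (hts : t < s) (hs : s ≤ b) : x t ≠ x s := by
  intro heq
  have hconst : EqOn x (fun _ => x t) (Icc t s) := fun τ hτ => by
    have := hx t ⟨ht, by linarith⟩ τ ⟨ht.trans hτ.1, hτ.2.trans hs⟩ s ⟨by linarith, hs⟩
      hτ.1 hτ.2
    rw [heq, sub_self, norm_zero, norm_le_zero_iff, sub_eq_zero] at this
    simp [heq, this]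
  have : (ae (volume.restrict (Ioo t s))).NeBot := ae_restrict_neBot.2 (by simp [hts])
  obtain ⟨σ, ⟨hder, hunit⟩, hσ⟩ :=
    ((harc.ae_restrict_Ioo ht hs).and (ae_restrict_mem measurableSet_Ioo)).exists
  have h0 : HasDerivAt x 0 σ := (hasDerivAt_const σ (x t)).congr_of_eventuallyEq
    (eventuallyEq_of_mem (Ioo_mem_nhds hσ.1 hσ.2) (hconst.mono Ioo_subset_Icc_self))
  simp [hder.unique h0] at hunit

end SteepestDescentOn

noncomputable def chordDirection (x : ℝ → E) (s : ℝ) (v : E) : ℝ → E :=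
  Function.update (fun t => normalize (x t - x s)) s (-normalize v)

theorem chordDirection_of_ne {x : ℝ → E} {s t : ℝ} {v : E} (ht : t ≠ s) :
    chordDirection x s v t = normalize (x t - x s) :=
  Function.update_of_ne ht ..

section Curve

variable {x xd : ℝ → E} {L s : ℝ} {v : E} {w : Fin 3 → E}

theorem Orthonormal.exists_chord_inner_gt (hw : Orthonormal ℝ w)
    (hcone : convexTangentCone (convexHull ℝ (x '' Icc 0 s)) (x s) = orthant w) (i : Fin 3)
    {ε : ℝ} (hε : 0 < ε) (hε1 : ε ≤ 1) :
    ∃ t ∈ Ico 0 s, (1 - ε) * ‖x t - x s‖ < ⟪x t - x s, w i⟫ := by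
  obtain ⟨_, ⟨t, ht, rfl⟩, h⟩ :=
    hw.exists_inner_gt_of_convexTangentCone_eq_orthant hcone i hε hε1
  refine ⟨t, ⟨ht.1, ht.2.lt_of_ne ?_⟩, h⟩
  rintro rfl
  simp at h

theorem SteepestDescentOn.exists_inner_sum_deriv_le (hE : finrank ℝ E = 3)
    (hx : SteepestDescentOn x (Icc 0 L))
    (hlip : LipschitzOnWith 1 x (Icc 0 L)) (hsL : s ≤ L) (hw : Orthonormal ℝ w)
    (hcone : convexTangentCone (convexHull ℝ (x '' Icc 0 s)) (x s) = orthant w) :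
    ∃ T < s, ∀ σ ∈ Ioo T s, ∀ d, HasDerivWithinAt x d (Icc 0 L) σ → ‖d‖ = 1 →
      ⟪∑ j, w j, d⟫ ≤ -1 / 2 := by
  -- Chords within angle `1/24` of the axes, and `σ` so close to `s` that
  -- `⟪d, x (t j) - x s⟫ ≤ ‖x (t j) - x s‖ / 24`; together they give `⟪d, w j⟫ ≤ 1/12`.
  choose t ht hclose using fun j =>
    hw.exists_chord_inner_gt hcone j (ε := (1 / 24) ^ 2 / 2) (by norm_num) (by norm_num)
  have hne : ∀ j, x (t j) - x s ≠ 0 := fun j h => by simpa [h] using hclose j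
  have hnear : ∀ j, ∀ᶠ σ in 𝓝[<] s, t j ≤ σ ∧ 24 * (s - σ) ≤ ‖x (t j) - x s‖ := fun j => by
    have hlt : s - ‖x (t j) - x s‖ / 24 < s := by linarith [norm_pos_iff.2 (hne j)]
    filter_upwards [Ioo_mem_nhdsLT (ht j).2, Ioo_mem_nhdsLT hlt] with σ hσ hσ'
    exact ⟨hσ.1.le, by linarith [hσ'.1]⟩
  obtain ⟨T, hTs, hT⟩ := mem_nhdsLT_iff_exists_Ioo_subset.1 (eventually_all.2 hnear)
  refine ⟨T, hTs, fun σ hσ d hd hd1 => ?_⟩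
  rw [real_inner_comm]
  refine hw.inner_sum_le_of_forall_inner_le hE hd1 fun j => ?_
  obtain ⟨htσ, hσs⟩ := hT hσ j
  have hchord := hx.inner_deriv_le hlip (ht j).1 htσ hσ.2.le hsL hd
  rw [hd1] at hchord
  exact (inner_le_add_of_near_direction hd1.le (hw.1 j) (hne j) (by norm_num)
    (hclose j).le (by linarith : ⟪d, x (t j) - x s⟫ ≤ 1 / 24 * ‖x (t j) - x s‖)).trans_eq
    (by norm_num)

theorem SteepestDescentOn.inner_sum_deriv_le (hE : finrank ℝ E = 3)
    (hx : SteepestDescentOn x (Icc 0 L)) (hlip : LipschitzOnWith 1 x (Icc 0 L))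
    (harc : IsArclengthParamOn x xd (Icc 0 L))
    (hsL : s ≤ L) (hv : HasDerivWithinAt x v (Icc 0 L) s) (hw : Orthonormal ℝ w)
    (hcone : convexTangentCone (convexHull ℝ (x '' Icc 0 s)) (x s) = orthant w) :
    ⟪∑ j, w j, v⟫ ≤ -1 / 2 := by
  obtain ⟨t₀, ht₀, -⟩ := hw.exists_chord_inner_gt hcone 0 one_pos le_rfl
  obtain ⟨T, hTs, hT⟩ := hx.exists_inner_sum_deriv_le hE hlip hsL hw hcone
  have hT's : max T 0 < s := max_lt hTs (ht₀.1.trans_lt ht₀.2)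
  have hslope : ∀ t ∈ Ioo (max T 0) s, ⟪∑ j, w j, slope x s t⟫ ≤ -1 / 2 := fun t ht => by
    have ht0 : 0 ≤ t := (le_max_right T 0).trans ht.1.le
    have hderiv :
        ∀ᵐ σ ∂(volume.restrict (Ioo t s)), deriv (fun τ => ⟪∑ j, w j, x τ⟫) σ ≤ -1 / 2 := by
      filter_upwards [harc.ae_restrict_Ioo ht0 hsL, ae_restrict_mem measurableSet_Ioo]
        with σ ⟨hder, hunit⟩ hσ
      have hG : HasDerivAt (fun τ => ⟪∑ j, w j, x τ⟫) ⟪∑ j, w j, xd σ⟫ σ :=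
        (innerSL ℝ (∑ j, w j)).hasFDerivAt.comp_hasDerivAt σ hder
      rw [hG.deriv]
      exact hT σ ⟨(le_max_left T 0).trans_lt (ht.1.trans hσ.1), hσ.2⟩ _ hder.hasDerivWithinAt
        hunit
    have hlipG : LipschitzOnWith _ (fun τ => ⟪∑ j, w j, x τ⟫) (Icc t s) :=
      (innerSL ℝ (∑ j, w j)).lipschitz.comp_lipschitzOnWith (hlip.mono (Icc_subset_Icc ht0 hsL))
    have hG := hlipG.sub_le_mul_of_ae_deriv_le ht.2.le hderiv
    rw [slope_def_module, real_inner_smul_right, inner_sub_right,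
      inv_mul_eq_div, div_le_iff_of_neg (sub_neg.2 ht.2)]
    linarith
  have hsub : Ioo (max T 0) s ⊆ Icc 0 L \ {s} := fun t ht =>
    ⟨⟨(le_max_right T 0).trans ht.1.le, ht.2.le.trans hsL⟩, ht.2.ne⟩
  have htend := (hasDerivWithinAt_iff_tendsto_slope.1 hv).mono_left (nhdsWithin_mono s hsub)
  have := right_nhdsWithin_Ioo_neBot hT's
  exact le_of_tendsto (tendsto_const_nhds.inner htend) (eventually_nhdsWithin_of_forall hslope)

theorem SteepestDescentOn.norm_chordDirection (hx : SteepestDescentOn x (Icc 0 L))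
    (harc : IsArclengthParamOn x xd (Icc 0 L))
    (hsL : s ≤ L) (hv0 : v ≠ 0) {t : ℝ} (ht : t ∈ Icc 0 s) : ‖chordDirection x s v t‖ = 1 := by
  rcases ht.2.eq_or_lt with rfl | hts
  · simp [chordDirection, norm_normalize hv0]
  · rw [chordDirection_of_ne hts.ne]
    exact norm_normalize (sub_ne_zero.2 (hx.ne_of_lt harc ht.1 hts hsL))

theorem SteepestDescentOn.inner_chordDirection_pos (hx : SteepestDescentOn x (Icc 0 L))
    (harc : IsArclengthParamOn x xd (Icc 0 L))
    (hsL : s ≤ L) {t t' : ℝ} (ht : t ∈ Ico 0 s)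
    (ht' : t' ∈ Ico 0 s) : 0 < ⟪chordDirection x s v t, chordDirection x s v t'⟫ := by
  wlog htt' : t ≤ t' generalizing t t'
  · exact real_inner_comm (chordDirection x s v t) _ ▸ this ht' ht (le_of_not_ge htt')
  have hne : ∀ τ ∈ Ico 0 s, x τ - x s ≠ 0 := fun τ hτ =>
    sub_ne_zero.2 (hx.ne_of_lt harc hτ.1 hτ.2 hsL)
  have hIcc : Icc 0 s ⊆ Icc 0 L := Icc_subset_Icc_right hsL
  rw [chordDirection_of_ne ht.2.ne, chordDirection_of_ne ht'.2.ne, NormedSpace.normalize,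
    NormedSpace.normalize, real_inner_smul_left, real_inner_smul_right]
  have hacute := hx.inner_sub_pos (hIcc (Ico_subset_Icc_self ht)) (hIcc (Ico_subset_Icc_self ht'))
    (hIcc ⟨ht.1.trans ht.2.le, le_rfl⟩) htt' ht'.2.le (sub_ne_zero.1 (hne t' ht'))
  have := norm_pos_iff.2 (hne t ht)
  have := norm_pos_iff.2 (hne t' ht')
  positivity

theorem SteepestDescentOn.continuousOn_chordDirection (hx : SteepestDescentOn x (Icc 0 L))
    (harc : IsArclengthParamOn x xd (Icc 0 L))
    (hlip : LipschitzOnWith 1 x (Icc 0 L))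
    (hsL : s ≤ L) (hv : HasDerivWithinAt x v (Icc 0 L) s) (hv0 : v ≠ 0) :
    ContinuousOn (chordDirection x s v) (Icc 0 s) := by
  intro t ht
  rcases ht.2.eq_or_lt with rfl | hts
  · rw [chordDirection, continuousWithinAt_update_same]
    have hslope := (hasDerivWithinAt_iff_tendsto_slope.1 hv).mono_left
      (nhdsWithin_mono t (sdiff_subset_sdiff_left (Icc_subset_Icc_right hsL)))
    refine ((continuousAt_normalize hv0).tendsto.comp hslope).neg.congr' ?_
    filter_upwards [self_mem_nhdsWithin] with τ hτ
    have hτt : τ - t < 0 := sub_neg.2 (hτ.1.2.lt_of_ne hτ.2)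
    rw [Function.comp_apply, slope_def_module, normalize_smul_of_neg (inv_lt_zero.2 hτt),
      neg_neg]
  · rw [chordDirection, continuousWithinAt_update_of_ne hts.ne]
    have hchord : ContinuousWithinAt (fun τ => x τ - x s) (Icc 0 s) t :=
      (hlip.continuousOn.mono (Icc_subset_Icc_right hsL) t ht).sub continuousWithinAt_const
    exact ContinuousAt.comp_continuousWithinAt (f := fun τ => x τ - x s)
      (continuousAt_normalize (sub_ne_zero.2 (hx.ne_of_lt harc ht.1 hts hsL))) hchord

theorem SteepestDescentOn.exists_chordDirection_eq (hx : SteepestDescentOn x (Icc 0 L))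
    (harc : IsArclengthParamOn x xd (Icc 0 L))
    (hlip : LipschitzOnWith 1 x (Icc 0 L)) (hs : s ∈ Icc 0 L)
    (hv : HasDerivWithinAt x v (Icc 0 L) s) (hv0 : v ≠ 0) (hw : Orthonormal ℝ w)
    (hcone : convexTangentCone (convexHull ℝ (x '' Icc 0 s)) (x s) = orthant w) (i : Fin 3) :
    ∃ t ∈ Icc 0 s, chordDirection x s v t = w i := by
  have hcont : ContinuousOn (fun t => ⟪chordDirection x s v t, w i⟫) (Icc 0 s) :=
    (hx.continuousOn_chordDirection harc hlip hs.2 hv hv0).inner continuousOn_const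
  obtain ⟨t₀, ht₀, hmax⟩ := isCompact_Icc.exists_isMaxOn (nonempty_Icc.2 hs.1) hcont
  have hunit := hx.norm_chordDirection harc hs.2 hv0 ht₀
  refine ⟨t₀, ht₀, (inner_eq_one_iff_of_norm_eq_one hunit (hw.1 i)).1
    ((real_inner_le_one_of_norm_eq_one hunit (hw.1 i)).antisymm ?_)⟩
  -- Chord directions come arbitrarily close to `w i`, so the maximum is at least `1`.
  by_contra! hlt
  obtain ⟨t, ht, hgt⟩ := hw.exists_chord_inner_gt hcone i
    (lt_min one_pos (sub_pos.2 hlt)) (min_le_left _ (1 - ⟪chordDirection x s v t₀, w i⟫))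
  have hle : ⟪chordDirection x s v t, w i⟫ ≤ ⟪chordDirection x s v t₀, w i⟫ :=
    hmax ⟨ht.1, ht.2.le⟩
  have hpos : 0 < ‖x t - x s‖ :=
    norm_pos_iff.2 (sub_ne_zero.2 (hx.ne_of_lt harc ht.1 ht.2 hs.2))
  rw [chordDirection_of_ne ht.2.ne, NormedSpace.normalize, real_inner_smul_left,
    inv_mul_le_iff₀ hpos] at hle
  nlinarith [min_le_right 1 (1 - ⟪chordDirection x s v t₀, w i⟫)]

end Curve

theorem tangent_cone_not_orthant_general (L : ℝ)
    (x xd : ℝ → EuclideanSpace ℝ (Fin 3))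
    (hlip : LipschitzOnWith 1 x (Icc 0 L))
    (harc : ∀ᵐ s ∂(volume.restrict (Icc 0 L)),
      HasDerivWithinAt x (xd s) (Icc 0 L) s ∧ ‖xd s‖ = 1)
    (hsd : ∀ t' ∈ Icc (0:ℝ) L, ∀ t'' ∈ Icc (0:ℝ) L, ∀ t''' ∈ Icc (0:ℝ) L,
      t' ≤ t'' → t'' ≤ t''' → ‖x t' - x t''‖ ≤ ‖x t' - x t'''‖)
    (s : ℝ) (hs : s ∈ Icc (0:ℝ) L)
    (v : EuclideanSpace ℝ (Fin 3)) (hv : HasDerivWithinAt x v (Icc 0 L) s) :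
    ¬ ∃ w : Fin 3 → EuclideanSpace ℝ (Fin 3),
        (∀ i j, ⟪w i, w j⟫ = if i = j then (1 : ℝ) else 0) ∧
        closure (⋃ y ∈ convexHull ℝ (x '' Icc 0 s),
            {z : EuclideanSpace ℝ (Fin 3) | ∃ r : ℝ, 0 ≤ r ∧ z = r • (y - x s)})
          = {z : EuclideanSpace ℝ (Fin 3) | ∃ a b c : ℝ, 0 ≤ a ∧ 0 ≤ b ∧ 0 ≤ c ∧
              z = a • w 0 + b • w 1 + c • w 2} := by
  rintro ⟨w, hw, hcone⟩
  replace hw : Orthonormal ℝ w := orthonormal_iff_ite.2 hw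
  have hx : SteepestDescentOn x (Icc 0 L) := hsd
  have hv0 : v ≠ 0 := by
    rintro rfl
    have := hx.inner_sum_deriv_le finrank_euclideanSpace_fin hlip harc hs.2 hv hw hcone
    norm_num at this
  choose t ht hwt using hx.exists_chordDirection_eq harc hlip hs hv hv0 hw hcone
  obtain ⟨i, j, hij, hside⟩ :=
    Fintype.exists_ne_map_eq_of_card_lt (fun i => decide (t i < s)) (by simp)
  by_cases hi : t i < s
  · have hj : t j < s := by simpa [hi] using hside.symm
    have hpos := hx.inner_chordDirection_pos harc hs.2 (v := v) ⟨(ht i).1, hi⟩ ⟨(ht j).1, hj⟩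
    rw [hwt i, hwt j, hw.inner_eq_zero hij] at hpos
    exact hpos.false
  · have hj : ¬t j < s := by simpa [hi] using hside.symm
    have htij : t i = t j := by linarith [(ht i).2, (ht j).2, not_lt.1 hi, not_lt.1 hj]
    exact hij (hw.linearIndependent.injective ((hwt i).symm.trans (htij ▸ hwt j)))

/-- for a steepest descent curve in ℝ³ in arclength
parametrization, the tangent cone to `co(γ(s))` at `x(s)` cannot be an orthant
at any point where `x'(s)` exists. -/
theorem tangent_cone_not_orthant (L : ℝ) (hL : 0 < L)
    (x xd : ℝ → EuclideanSpace ℝ (Fin 3))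
    (hlip : LipschitzOnWith 1 x (Icc 0 L))
    (harc : ∀ᵐ s ∂(volume.restrict (Icc 0 L)),
      HasDerivWithinAt x (xd s) (Icc 0 L) s ∧ ‖xd s‖ = 1)
    (hsd : ∀ t' ∈ Icc (0:ℝ) L, ∀ t'' ∈ Icc (0:ℝ) L, ∀ t''' ∈ Icc (0:ℝ) L,
      t' ≤ t'' → t'' ≤ t''' → ‖x t' - x t''‖ ≤ ‖x t' - x t'''‖)
    (s : ℝ) (hs : s ∈ Icc (0:ℝ) L)
    (v : EuclideanSpace ℝ (Fin 3)) (hv : HasDerivWithinAt x v (Icc 0 L) s) :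
    ¬ ∃ w : Fin 3 → EuclideanSpace ℝ (Fin 3),
        (∀ i j, ⟪w i, w j⟫ = if i = j then (1 : ℝ) else 0) ∧
        closure (⋃ y ∈ convexHull ℝ (x '' Icc 0 s),
            {z : EuclideanSpace ℝ (Fin 3) | ∃ r : ℝ, 0 ≤ r ∧ z = r • (y - x s)})
          = {z : EuclideanSpace ℝ (Fin 3) | ∃ a b c : ℝ, 0 ≤ a ∧ 0 ≤ b ∧ 0 ≤ c ∧
              z = a • w 0 + b • w 1 + c • w 2} :=
  tangent_cone_not_orthant_general L x xd hlip harc hsd s hs v hv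
end
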